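/- arXiv:2208.03477 — 3 statements merged into one kernel-verified Lean document; each statement's English description precedes it below -/
import Mathlib

section
/- Let a : ℝ → ℝ be twice continuously differentiable with a(x) ≥ 0 for all x ∈ ℝ, and suppose there is M₁ > 0 with |a''(x)| ≤ M₁ for all x ∈ ℝ. Then |a'(x)|² ≤ 2 M₁ a(x) for all x ∈ ℝ. -/
/-!
Expanding to second order with `a'' ≤ M₁` gives `0 ≤ a (x + h) ≤ a x + a' x * h + M₁ * h ^ 2 / 2`
for every `h`. A quadratic polynomial in `h` that is everywhere nonnegative has nonpositive
discriminant, and that discriminant is `a' x ^ 2 - 2 * M₁ * a x`.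
-/

open Set

theorem ConvexOn.add_mul_sub_le_of_hasDerivAt {S : Set ℝ} {f : ℝ → ℝ} {f' x y : ℝ}
    (hf : ConvexOn ℝ S f) (hx : x ∈ S) (hy : y ∈ S) (hd : HasDerivAt f f' x) :
    f x + f' * (y - x) ≤ f y := by
  rcases lt_trichotomy x y with hxy | rfl | hyx
  · have hslope := hf.le_slope_of_hasDerivAt hx hy hxy hd
    rw [slope_def_field, le_div_iff₀ (sub_pos.2 hxy)] at hslope
    linarith
  · simp
  · have hslope := hf.slope_le_of_hasDerivAt hy hx hyx hd
    rw [slope_def_field, div_le_iff₀ (sub_pos.2 hyx)] at hslope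
    linarith

/-- `M * y ^ 2 / 2 - f y` is convex, so it lies above its tangent line at `x`. -/
theorem le_add_deriv_mul_add_of_deriv_deriv_le {f : ℝ → ℝ} {M : ℝ} (hf : Differentiable ℝ f)
    (hf' : Differentiable ℝ (deriv f)) (hM : ∀ x, deriv (deriv f) x ≤ M) (x y : ℝ) :
    f y ≤ f x + deriv f x * (y - x) + M / 2 * (y - x) ^ 2 := by
  set g : ℝ → ℝ := fun y => M / 2 * y ^ 2 - f y
  have hg' : ∀ y, HasDerivAt g (M * y - deriv f y) y := fun y => by
    refine (((hasDerivAt_pow 2 y).const_mul (M / 2)).fun_sub (hf y).hasDerivAt).congr_deriv ?_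
    ring
  have hderiv : deriv g = fun y => M * y - deriv f y := funext fun y => (hg' y).deriv
  have hg'' : ∀ y, HasDerivAt (deriv g) (M - deriv (deriv f) y) y := fun y => by
    rw [hderiv]
    simpa using ((hasDerivAt_id y).const_mul M).fun_sub (hf' y).hasDerivAt
  have hconv : ConvexOn ℝ univ g :=
    convexOn_univ_of_deriv2_nonneg (fun y => (hg' y).differentiableAt)
      (fun y => (hg'' y).differentiableAt) fun y => by
        rw [Function.iterate_succ_apply, Function.iterate_one, (hg'' y).deriv]
        linarith [hM y]
  have htangent := hconv.add_mul_sub_le_of_hasDerivAt (mem_univ x) (mem_univ y) (hg' x)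
  linear_combination htangent

theorem sq_deriv_le_of_nonneg_of_deriv_deriv_le {f : ℝ → ℝ} {M : ℝ} (hf : Differentiable ℝ f)
    (hf' : Differentiable ℝ (deriv f)) (hnonneg : ∀ x, 0 ≤ f x)
    (hM : ∀ x, deriv (deriv f) x ≤ M) (x : ℝ) :
    deriv f x ^ 2 ≤ 2 * M * f x := by
  have hquadratic : ∀ h, 0 ≤ M / 2 * (h * h) + deriv f x * h + f x := fun h => by
    have htaylor := le_add_deriv_mul_add_of_deriv_deriv_le hf hf' hM x (x + h)
    rw [add_sub_cancel_left] at htaylor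
    linarith [hnonneg (x + h)]
  have hdiscrim := discrim_le_zero hquadratic
  rw [discrim] at hdiscrim
  linarith

theorem glaeser_inequality_general (a : ℝ → ℝ) (ha : ContDiff ℝ 2 a)
    (ha_nonneg : ∀ x, 0 ≤ a x) (M₁ : ℝ)
    (hbound : ∀ x, |deriv (deriv a) x| ≤ M₁) :
    ∀ x, |deriv a x| ^ 2 ≤ 2 * M₁ * a x := fun x => by
  rw [sq_abs]
  exact sq_deriv_le_of_nonneg_of_deriv_deriv_le (ha.differentiable (by norm_num))
    ha.differentiable_deriv_two ha_nonneg (fun y => (le_abs_self _).trans (hbound y)) x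

/-- Glaeser's inequality in one dimension: if `a : ℝ → ℝ` is twice continuously
differentiable, nonnegative, and its second derivative is bounded by `M₁ > 0`,
then `|a'(x)|² ≤ 2 M₁ a(x)` for all `x`. -/
theorem glaeser_inequality (a : ℝ → ℝ) (ha : ContDiff ℝ 2 a)
    (ha_nonneg : ∀ x, 0 ≤ a x) (M₁ : ℝ) (hM₁ : 0 < M₁)
    (hbound : ∀ x, |deriv (deriv a) x| ≤ M₁) :
    ∀ x, |deriv a x| ^ 2 ≤ 2 * M₁ * a x :=
  glaeser_inequality_general a ha ha_nonneg M₁ hbound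
end

section
/- Let a : ℝ → ℝ be smooth and bounded together with all its derivatives, with a(x) ≥ 0 for all x ∈ ℝ, let φ be a mollifier, let ω > 0, and set a_ω := a ∗ φ_ω. Then for all x ∈ ℝ one has |a_ω'(x)|² ≤ 2 M₁ a_ω(x), where M₁ = sup_{x ∈ ℝ} |a''(x)|; in particular M₁ does not depend on ω. -/
open MeasureTheory

/-- Core Glaeser step: `f ≥ 0`, `f' = g` is `M`-Lipschitz, `M > 0`, `g x ≤ 0`
implies `g x ^ 2 ≤ 2 M f x`. -/
private lemma glaeser_key {f g : ℝ → ℝ} {M : ℝ} (hM : 0 < M)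
    (hf : ∀ x, HasDerivAt f (g x) x)
    (hg : ∀ y z, |g y - g z| ≤ M * |y - z|)
    (hpos : ∀ x, 0 ≤ f x) (x : ℝ) (hgx : g x ≤ 0) : g x ^ 2 ≤ 2 * M * f x := by
  set h : ℝ := -g x / M with hh
  have hh0 : 0 ≤ h := div_nonneg (by linarith) hM.le
  have hcg : Continuous g := by
    have : LipschitzWith (Real.toNNReal M) g := by
      apply LipschitzWith.of_dist_le_mul
      intro y z
      simp only [Real.dist_eq]
      calc |g y - g z| ≤ M * |y - z| := hg y z
        _ ≤ Real.toNNReal M * |y - z| := by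
            gcongr
            exact Real.le_coe_toNNReal M
    exact this.continuous
  have hint : IntervalIntegrable g volume x (x + h) := hcg.intervalIntegrable _ _
  have hint2 : IntervalIntegrable (fun t => g x + M * (t - x)) volume x (x + h) :=
    (continuous_const.add
      (continuous_const.mul ((continuous_id.sub continuous_const)))).intervalIntegrable _ _
  have hftc : ∫ t in x..(x + h), g t = f (x + h) - f x :=
    intervalIntegral.integral_eq_sub_of_hasDerivAt (fun t _ => hf t) hint
  have hmono : (∫ t in x..(x + h), g t) ≤ ∫ t in x..(x + h), (g x + M * (t - x)) := by
    apply intervalIntegral.integral_mono_on (by linarith) hint hint2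
    intro t ht
    have h1 := hg t x
    have h2 : |t - x| = t - x := abs_of_nonneg (by linarith [ht.1])
    rw [h2] at h1
    have := (abs_le.mp h1).2
    linarith
  have hval : (∫ t in x..(x + h), (g x + M * (t - x))) = h * g x + M * (h ^ 2 / 2) := by
    have hintB : IntervalIntegrable (fun t : ℝ => M * (t - x)) volume x (x + h) := by
      apply Continuous.intervalIntegrable
      fun_prop
    rw [intervalIntegral.integral_add intervalIntegrable_const hintB,
      intervalIntegral.integral_const, intervalIntegral.integral_const_mul]
    have : (∫ t in x..(x + h), (t - x)) = ∫ t in (0:ℝ)..h, t := by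
      rw [intervalIntegral.integral_comp_sub_right (fun t => t) x]
      norm_num
    rw [this, integral_id, smul_eq_mul]
    ring
  have key : 0 ≤ f x + h * g x + M * (h ^ 2 / 2) := by
    have h0 := hpos (x + h)
    linarith [hftc ▸ hmono, hval ▸ hmono]
  have hMne : M ≠ 0 := hM.ne'
  have hhval : h = -g x / M := hh
  have : 0 ≤ f x + (-g x / M) * g x + M * ((-g x / M) ^ 2 / 2) := by
    rw [← hhval]; exact key
  have hexp : f x + (-g x / M) * g x + M * ((-g x / M) ^ 2 / 2)
      = f x - g x ^ 2 / (2 * M) := by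
    field_simp
    ring
  rw [hexp] at this
  have h2M : 0 < 2 * M := by linarith
  have := (div_le_iff₀ h2M).mp (by linarith : g x ^ 2 / (2 * M) ≤ f x)
  linarith

/-- As `glaeser_key`, without the sign condition on `g x`. -/
private lemma glaeser_key' {f g : ℝ → ℝ} {M : ℝ} (hM : 0 < M)
    (hf : ∀ x, HasDerivAt f (g x) x)
    (hg : ∀ y z, |g y - g z| ≤ M * |y - z|)
    (hpos : ∀ x, 0 ≤ f x) (x : ℝ) : g x ^ 2 ≤ 2 * M * f x := by
  rcases le_or_gt (g x) 0 with hsign | hsign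
  · exact glaeser_key hM hf hg hpos x hsign
  · have key := glaeser_key (f := fun t => f (2 * x - t)) (g := fun t => -g (2 * x - t)) hM
      ?_ ?_ (fun t => hpos _) x ?_
    · have hx : 2 * x - x = x := by ring
      simpa [hx] using key
    · intro t
      have h1 : HasDerivAt (fun t : ℝ => 2 * x - t) (-1) t := by
        simpa using (hasDerivAt_id t).const_sub (2 * x)
      have := (hf (2 * x - t)).comp t h1
      simpa [mul_comm, Function.comp_def] using this
    · intro y z
      have h1 := hg (2 * x - z) (2 * x - y)
      have e1 : |(-g (2 * x - y)) - (-g (2 * x - z))| = |g (2 * x - z) - g (2 * x - y)| := by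
        rw [show (-g (2 * x - y)) - (-g (2 * x - z)) = g (2 * x - z) - g (2 * x - y) by ring]
      have e2 : |(2 * x - z) - (2 * x - y)| = |y - z| := by
        rw [show (2 * x - z) - (2 * x - y) = y - z by ring]
      rw [e1]
      rw [e2] at h1
      exact h1
    · show -g (2 * x - x) ≤ 0
      rw [show 2 * x - x = x by ring]
      linarith

private lemma glaeser_main {f g : ℝ → ℝ} {S : ℝ}
    (hf : ∀ x, HasDerivAt f (g x) x)
    (hg : ∀ y z, |g y - g z| ≤ S * |y - z|)
    (hpos : ∀ x, 0 ≤ f x) (x : ℝ) : g x ^ 2 ≤ 2 * S * f x := by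
  have hS : 0 ≤ S := by
    have h0 := hg 0 1
    have h1 := abs_nonneg (g 0 - g 1)
    have : |(0:ℝ) - 1| = 1 := by norm_num
    rw [this, mul_one] at h0
    linarith
  refine le_of_forall_pos_le_add fun ε hε => ?_
  have hfx := hpos x
  set δ := ε / (2 * f x + 1) with hδdef
  have hδ : 0 < δ := div_pos hε (by linarith)
  have hg' : ∀ y z, |g y - g z| ≤ (S + δ) * |y - z| := fun y z =>
    (hg y z).trans (by nlinarith [abs_nonneg (y - z)])
  have key := glaeser_key' (M := S + δ) (by linarith) hf hg' hpos x
  have hδε : δ * (2 * f x + 1) = ε := div_mul_cancel₀ _ (by linarith)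
  nlinarith [key]

/-- Parametrised Glaeser inequality, uniform in the mollification parameter: if
`a ∈ B^∞(ℝ)` (smooth, bounded with all derivatives bounded) is nonnegative, `φ` is a
mollifier and `ω > 0`, then `a_ω = a ∗ φ_ω` satisfies
`|a_ω'(x)|² ≤ 2 M₁ a_ω(x)` for all `x`, with `M₁ = sup_x |a''(x)|` independent of `ω`. -/
theorem glaeser_mollified_Binfty (a φ : ℝ → ℝ) (ω : ℝ) (hω : 0 < ω)
    (ha_smooth : ContDiff ℝ (⊤ : ℕ∞) a)
    (ha_bd : ∀ k : ℕ, ∃ C : ℝ, ∀ x, |iteratedDeriv k a x| ≤ C)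
    (ha_nonneg : ∀ x, 0 ≤ a x)
    (hφ_smooth : ContDiff ℝ (⊤ : ℕ∞) φ) (hφ_supp : HasCompactSupport φ)
    (hφ_nonneg : ∀ x, 0 ≤ φ x) (hφ_int : ∫ x, φ x = 1) :
    ∀ x, |deriv (fun x => ∫ ξ, a (x - ξ) * (ω⁻¹ * φ (ξ / ω))) x| ^ 2 ≤
      2 * (⨆ y, |deriv (deriv a) y|) * ∫ ξ, a (x - ξ) * (ω⁻¹ * φ (ξ / ω)) := by
  intro x
  have hωne : ω ≠ 0 := hω.ne'
  set ψ : ℝ → ℝ := fun ξ => ω⁻¹ * φ (ξ / ω) with hψdef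
  have hψc : Continuous ψ :=
    continuous_const.mul (hφ_smooth.continuous.comp (continuous_id.div_const ω))
  have hψ_supp : HasCompactSupport ψ := by
    have h1 : HasCompactSupport (fun ξ : ℝ => φ (ξ / ω)) := by
      have := hφ_supp.comp_smul (c := ω⁻¹) (inv_ne_zero hωne)
      simpa [smul_eq_mul, div_eq_inv_mul, mul_comm] using this
    exact h1.mul_left
  have hψ_int : Integrable ψ := hψc.integrable_of_hasCompactSupport hψ_supp
  have hψ_nonneg : ∀ ξ, 0 ≤ ψ ξ := fun ξ =>
    mul_nonneg (inv_nonneg.mpr hω.le) (hφ_nonneg _)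
  have hψ_one : ∫ ξ, ψ ξ = 1 := by
    have h1 : ∫ ξ, ψ ξ = ω⁻¹ * ∫ ξ, φ (ξ / ω) := integral_const_mul _ _
    rw [h1, MeasureTheory.Measure.integral_comp_div φ ω, hφ_int, smul_eq_mul, mul_one,
      abs_of_pos hω]
    field_simp
  -- smoothness of a
  have ha_inf : ContDiff ℝ ((⊤ : ℕ∞) : WithTop ℕ∞) a := ha_smooth.of_le (by simp)
  have hda : Differentiable ℝ a := ha_inf.differentiable (by simp)
  have ha' : ContDiff ℝ ((⊤ : ℕ∞) : WithTop ℕ∞) (deriv a) :=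
    (contDiff_infty_iff_deriv.mp ha_inf).2
  have hda' : Differentiable ℝ (deriv a) := ha'.differentiable (by simp)
  set S := ⨆ y, |deriv (deriv a) y| with hSdef
  obtain ⟨C2, hC2⟩ := ha_bd 2
  have hbdd : ∀ y, |deriv (deriv a) y| ≤ C2 := by
    intro y
    have := hC2 y
    rwa [iteratedDeriv_succ, iteratedDeriv_one] at this
  have hSle : ∀ y, |deriv (deriv a) y| ≤ S := fun y =>
    le_ciSup ⟨C2, by rintro _ ⟨y, rfl⟩; exact hbdd y⟩ y
  have hlip : ∀ u v, |deriv a u - deriv a v| ≤ S * |u - v| := by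
    intro u v
    have := Convex.norm_image_sub_le_of_norm_deriv_le (s := Set.univ) (f := deriv a)
      (fun y _ => hda' y) (fun y _ => hSle y) convex_univ (Set.mem_univ v) (Set.mem_univ u)
    simpa [Real.norm_eq_abs] using this
  obtain ⟨C1, hC1⟩ := ha_bd 1
  have hC1' : ∀ y, |deriv a y| ≤ C1 := by
    intro y
    have := hC1 y
    rwa [iteratedDeriv_one] at this
  set F : ℝ → ℝ := fun x => ∫ ξ, a (x - ξ) * ψ ξ with hFdef
  set G : ℝ → ℝ := fun x => ∫ ξ, deriv a (x - ξ) * ψ ξ with hGdef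
  have hi1 : ∀ x, Integrable (fun ξ => a (x - ξ) * ψ ξ) := fun x =>
    ((ha_smooth.continuous.comp (continuous_const.sub continuous_id)).mul
      hψc).integrable_of_hasCompactSupport hψ_supp.mul_left
  have hi2 : ∀ x, Integrable (fun ξ => deriv a (x - ξ) * ψ ξ) := fun x =>
    ((ha'.continuous.comp (continuous_const.sub continuous_id)).mul
      hψc).integrable_of_hasCompactSupport hψ_supp.mul_left
  have hFderiv : ∀ x₀ : ℝ, HasDerivAt F (G x₀) x₀ := by
    intro x₀
    have key := hasDerivAt_integral_of_dominated_loc_of_deriv_le (μ := volume)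
      (F := fun x ξ => a (x - ξ) * ψ ξ) (F' := fun x ξ => deriv a (x - ξ) * ψ ξ)
      (bound := fun ξ => C1 * ψ ξ) (x₀ := x₀) (s := Metric.ball x₀ 1) (Metric.ball_mem_nhds x₀ one_pos)
      (Filter.Eventually.of_forall fun x => (hi1 x).aestronglyMeasurable)
      (hi1 x₀) ((hi2 x₀).aestronglyMeasurable) ?_ (hψ_int.const_mul C1) ?_
    · exact key.2
    · filter_upwards with ξ
      intro y _
      rw [Real.norm_eq_abs, abs_mul, abs_of_nonneg (hψ_nonneg ξ)]
      exact mul_le_mul_of_nonneg_right (hC1' _) (hψ_nonneg ξ)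
    · filter_upwards with ξ
      intro y _
      have h1 : HasDerivAt (fun x : ℝ => a (x - ξ)) (deriv a (y - ξ)) y := by
        have := ((hda (y - ξ)).hasDerivAt).comp y ((hasDerivAt_id y).sub_const ξ)
        simpa [Function.comp_def] using this
      exact h1.mul_const (ψ ξ)
  have hG_lip : ∀ y z, |G y - G z| ≤ S * |y - z| := by
    intro y z
    have hint3 : Integrable (fun ξ => (deriv a (y - ξ) - deriv a (z - ξ)) * ψ ξ) := by
      have := (hi2 y).sub (hi2 z)
      simpa [sub_mul, Pi.sub_def] using this
    have hsub : G y - G z = ∫ ξ, (deriv a (y - ξ) - deriv a (z - ξ)) * ψ ξ := by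
      rw [hGdef]
      rw [← integral_sub (hi2 y) (hi2 z)]
      congr 1
      ext ξ
      ring
    rw [hsub]
    calc |∫ ξ, (deriv a (y - ξ) - deriv a (z - ξ)) * ψ ξ|
        ≤ ∫ ξ, |(deriv a (y - ξ) - deriv a (z - ξ)) * ψ ξ| := by
          have h := norm_integral_le_integral_norm (μ := volume)
            (fun ξ => (deriv a (y - ξ) - deriv a (z - ξ)) * ψ ξ)
          simp only [Real.norm_eq_abs] at h
          exact h
      _ ≤ ∫ ξ, (S * |y - z|) * ψ ξ := by
          apply integral_mono hint3.abs (hψ_int.const_mul _)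
          intro ξ
          show |(deriv a (y - ξ) - deriv a (z - ξ)) * ψ ξ| ≤ (S * |y - z|) * ψ ξ
          rw [abs_mul, abs_of_nonneg (hψ_nonneg ξ)]
          apply mul_le_mul_of_nonneg_right _ (hψ_nonneg ξ)
          have := hlip (y - ξ) (z - ξ)
          rwa [show y - ξ - (z - ξ) = y - z by ring] at this
      _ = S * |y - z| := by rw [integral_const_mul, hψ_one, mul_one]
  have hFpos : ∀ x, 0 ≤ F x := fun x =>
    integral_nonneg fun ξ => mul_nonneg (ha_nonneg _) (hψ_nonneg ξ)
  have hderiv_eq : deriv F x = G x := (hFderiv x).deriv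
  rw [hderiv_eq, sq_abs]
  exact glaeser_main hFderiv hG_lip hFpos x
end

section
/- Let a, b₁ : ℝ → ℝ be bounded continuous functions with a(x) ≥ 0 for all x ∈ ℝ, and suppose there is M₂ > 0 such that b₁(x)² ≤ M₂ a(x) for all x ∈ ℝ (the Levi condition). Let φ be a mollifier and let λ denote Lebesgue measure. Then for every ε ∈ (0,1] and every x ∈ ℝ one has (b₁ ∗ φ_ε)(x)² ≤ M̃₂ (a ∗ φ_ε)(x), where M̃₂ = M₂ · λ(supp φ) · sup_{x ∈ ℝ} φ(x); in particular M̃₂ is independent of ε. -/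
open MeasureTheory Set

/-- Transfer of the Levi condition to the mollified coefficients: if `a, b₁` are
bounded continuous, `a ≥ 0`, and `b₁(x)² ≤ M₂ a(x)` for all `x`, then for every
`ε ∈ (0,1]` and `x ∈ ℝ` one has `(b₁ ∗ φ_ε)(x)² ≤ M̃₂ (a ∗ φ_ε)(x)` where
`M̃₂ = M₂ · λ(supp φ) · sup φ` is independent of `ε`. -/
theorem levi_condition_mollified (a b₁ φ : ℝ → ℝ)
    (ha_cont : Continuous a) (ha_bd : ∃ C : ℝ, ∀ x, |a x| ≤ C)
    (hb₁_cont : Continuous b₁) (hb₁_bd : ∃ C : ℝ, ∀ x, |b₁ x| ≤ C)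
    (ha_nonneg : ∀ x, 0 ≤ a x)
    (M₂ : ℝ) (hM₂ : 0 < M₂) (hLevi : ∀ x, (b₁ x) ^ 2 ≤ M₂ * a x)
    (hφ_smooth : ContDiff ℝ (⊤ : ℕ∞) φ) (hφ_supp : HasCompactSupport φ)
    (hφ_nonneg : ∀ x, 0 ≤ φ x) (hφ_int : ∫ x, φ x = 1) :
    ∀ ε ∈ Ioc (0 : ℝ) 1, ∀ x : ℝ,
      (∫ ξ, b₁ (x - ξ) * (ε⁻¹ * φ (ξ / ε))) ^ 2 ≤
        (M₂ * (volume (tsupport φ)).toReal * ⨆ y, φ y) *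
          ∫ ξ, a (x - ξ) * (ε⁻¹ * φ (ξ / ε)) := by
  have hφ_cont : Continuous φ := hφ_smooth.continuous
  have hφ_integrable : Integrable φ := hφ_cont.integrable_of_hasCompactSupport hφ_supp
  -- `φ` is bounded above, and the sup bound
  have hφ_bdd : BddAbove (range φ) := by
    obtain ⟨C, hC⟩ := hφ_cont.bounded_above_of_compact_support hφ_supp
    exact ⟨C, by rintro y ⟨z, rfl⟩; exact (le_abs_self _).trans ((Real.norm_eq_abs _) ▸ hC z)⟩
  have hφ_le_sup : ∀ y, φ y ≤ ⨆ y, φ y := fun y => le_ciSup hφ_bdd y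
  -- `1 ≤ λ(tsupport φ) * sup φ`
  have hfin : volume (tsupport φ) < ⊤ := hφ_supp.isCompact.measure_lt_top
  have hone : (1 : ℝ) ≤ (volume (tsupport φ)).toReal * ⨆ y, φ y := by
    have h1 : ∫ y, φ y = ∫ y in tsupport φ, φ y :=
      (setIntegral_eq_integral_of_forall_compl_eq_zero
        (fun y hy => image_eq_zero_of_notMem_tsupport hy)).symm
    have h2 : ‖∫ y in tsupport φ, φ y‖ ≤ (⨆ y, φ y) * (volume (tsupport φ)).toReal := by
      refine norm_setIntegral_le_of_norm_le_const hfin (fun y _ => ?_)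
      rw [Real.norm_eq_abs, abs_of_nonneg (hφ_nonneg y)]
      exact hφ_le_sup y
    calc (1 : ℝ) = ‖∫ y in tsupport φ, φ y‖ := by rw [← h1, hφ_int]; simp
      _ ≤ (⨆ y, φ y) * (volume (tsupport φ)).toReal := h2
      _ = (volume (tsupport φ)).toReal * ⨆ y, φ y := mul_comm _ _
  intro ε hε x
  obtain ⟨hε0, _⟩ := hε
  set ψ : ℝ → ℝ := fun ξ => ε⁻¹ * φ (ξ / ε) with hψdef
  have hψ_cont : Continuous ψ := continuous_const.mul (hφ_cont.comp (continuous_id.div_const ε))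
  have hψ_nonneg : ∀ ξ, 0 ≤ ψ ξ := fun ξ =>
    mul_nonneg (inv_nonneg.2 hε0.le) (hφ_nonneg _)
  have hψ_integrable : Integrable ψ := (hφ_integrable.comp_div hε0.ne').const_mul _
  have hψ_int : ∫ ξ, ψ ξ = 1 := by
    rw [hψdef]
    simp only [integral_const_mul]
    rw [Measure.integral_comp_div φ ε, hφ_int, abs_of_pos hε0, smul_eq_mul, mul_one,
      inv_mul_cancel₀ hε0.ne']
  -- the mollifier probability measure
  set ν : Measure ℝ := volume.withDensity (fun ξ => ENNReal.ofReal (ψ ξ)) with hνdef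
  have hν_prob : IsProbabilityMeasure ν := by
    constructor
    rw [hνdef, withDensity_apply _ MeasurableSet.univ, Measure.restrict_univ,
      ← ofReal_integral_eq_lintegral_ofReal hψ_integrable
        (Filter.Eventually.of_forall hψ_nonneg), hψ_int]
    simp
  have hν_int : ∀ g : ℝ → ℝ, ∫ ξ, g ξ ∂ν = ∫ ξ, g ξ * ψ ξ := by
    intro g
    have hmeas : Measurable fun ξ => Real.toNNReal (ψ ξ) :=
      hψ_cont.measurable.real_toNNReal
    have : ν = volume.withDensity (fun ξ => ((Real.toNNReal (ψ ξ) : NNReal) : ENNReal)) := rfl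
    rw [this, integral_withDensity_eq_integral_smul hmeas]
    congr 1; funext ξ
    rw [NNReal.smul_def, smul_eq_mul, Real.coe_toNNReal _ (hψ_nonneg ξ), mul_comm]
  set B : ℝ → ℝ := fun ξ => b₁ (x - ξ) with hBdef
  set A : ℝ → ℝ := fun ξ => a (x - ξ) with hAdef
  obtain ⟨Cb, hCb⟩ := hb₁_bd
  obtain ⟨Ca, hCa⟩ := ha_bd
  have hB_memℒp : MemLp B 2 ν :=
    MemLp.of_bound ((hb₁_cont.comp (continuous_const.sub continuous_id)).aestronglyMeasurable)
      Cb (Filter.Eventually.of_forall fun ξ => (Real.norm_eq_abs _) ▸ hCb (x - ξ))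
  have hA_int : Integrable A ν :=
    (MemLp.of_bound ((ha_cont.comp (continuous_const.sub continuous_id)).aestronglyMeasurable)
      Ca (Filter.Eventually.of_forall fun ξ => (Real.norm_eq_abs _) ▸ hCa (x - ξ))).integrable le_rfl
  -- Cauchy–Schwarz via nonnegativity of the variance
  have hvar : (∫ ξ, B ξ ∂ν) ^ 2 ≤ ∫ ξ, (B ξ) ^ 2 ∂ν := by
    have h := ProbabilityTheory.variance_nonneg B ν
    rw [ProbabilityTheory.variance_eq_sub hB_memℒp] at h
    have : (∫ ξ, (B ^ 2) ξ ∂ν) = ∫ ξ, (B ξ) ^ 2 ∂ν := by rfl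
    linarith [h, this ▸ h]
  have hlevi' : ∫ ξ, (B ξ) ^ 2 ∂ν ≤ M₂ * ∫ ξ, A ξ ∂ν := by
    rw [← integral_const_mul]
    exact integral_mono hB_memℒp.integrable_sq (hA_int.const_mul _)
      (fun ξ => hLevi (x - ξ))
  have hAψ_nonneg : 0 ≤ ∫ ξ, A ξ * ψ ξ :=
    integral_nonneg fun ξ => mul_nonneg (ha_nonneg _) (hψ_nonneg ξ)
  have key : (∫ ξ, B ξ * ψ ξ) ^ 2 ≤ M₂ * ∫ ξ, A ξ * ψ ξ := by
    rw [← hν_int B, ← hν_int A]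
    calc (∫ ξ, B ξ ∂ν) ^ 2 ≤ ∫ ξ, (B ξ) ^ 2 ∂ν := hvar
      _ ≤ M₂ * ∫ ξ, A ξ ∂ν := hlevi'
  calc (∫ ξ, b₁ (x - ξ) * (ε⁻¹ * φ (ξ / ε))) ^ 2 ≤ M₂ * ∫ ξ, A ξ * ψ ξ := key
    _ ≤ (M₂ * (volume (tsupport φ)).toReal * ⨆ y, φ y) * ∫ ξ, A ξ * ψ ξ := by
        apply mul_le_mul_of_nonneg_right _ hAψ_nonneg
        calc M₂ = M₂ * 1 := (mul_one _).symm
          _ ≤ M₂ * ((volume (tsupport φ)).toReal * ⨆ y, φ y) := by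
              exact mul_le_mul_of_nonneg_left hone hM₂.le
          _ = M₂ * (volume (tsupport φ)).toReal * ⨆ y, φ y := (mul_assoc _ _ _).symm
end
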